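/- arXiv:1910.00606 — 5 statements merged into one kernel-verified Lean document; each statement's English description precedes it below -/
import Mathlib

section
/- Let g : Z → X be a continuous surjection of compact metrizable spaces whose fibers g⁻¹(x) are all totally disconnected (i.e., g is zero-dimensional), and suppose dim X is finite. Then for every ε > 0 there exists δ > 0 such that for every closed subset F ⊆ X of diameter less than δ, every connected component of g⁻¹(F) has diameter less than ε. -/
/-- `CovDimLE X n` : the Lebesgue covering dimension of `X` is at most `n`, i.e. every
finite open cover of `X` admits a finite open refinement (still covering `X`) of order
at most `n + 1` (every point belongs to at most `n + 1` members). -/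
def CovDimLE (X : Type*) [TopologicalSpace X] (n : ℕ) : Prop :=
  ∀ U : Finset (Set X), (∀ u ∈ U, IsOpen u) → ⋃₀ (U : Set (Set X)) = Set.univ →
    ∃ V : Finset (Set X), (∀ v ∈ V, IsOpen v) ∧ ⋃₀ (V : Set (Set X)) = Set.univ ∧
      (∀ v ∈ V, ∃ u ∈ U, v ⊆ u) ∧
      ∀ x : X, {v ∈ (V : Set (Set X)) | x ∈ v}.ncard ≤ n + 1

open Set Metric in
/-- A compact, totally disconnected subset of a metric space can be split into finitely
many pairwise disjoint compact pieces of diameter at most `ε`. -/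
lemma exists_disjoint_compact_cover {Z : Type*} [MetricSpace Z] {K : Set Z}
    (hK : IsCompact K) (htd : IsTotallyDisconnected K) {ε : ℝ} (hε : 0 < ε) :
    ∃ (n : ℕ) (B : Fin n → Set Z), (∀ i, IsCompact (B i)) ∧
      (Pairwise fun i j => Disjoint (B i) (B j)) ∧ (⋃ i, B i) = K ∧
      ∀ i, Metric.diam (B i) ≤ ε := by
  classical
  haveI : CompactSpace ↥K := isCompact_iff_compactSpace.mp hK
  haveI : TotallyDisconnectedSpace ↥K := totallyDisconnectedSpace_subtype_iff.2 htd
  -- clopen neighborhoods inside small balls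
  have hU : ∀ z : ↥K, ∃ U : Set ↥K, IsClopen U ∧ z ∈ U ∧ U ⊆ Metric.ball z (ε / 2) := by
    intro z
    obtain ⟨U, hU, hzU, hUsub⟩ := isTopologicalBasis_isClopen.mem_nhds_iff.1
      (Metric.ball_mem_nhds z (half_pos hε))
    exact ⟨U, hU, hzU, hUsub⟩
  choose U hUclopen hUmem hUsub using hU
  obtain ⟨t, ht⟩ := isCompact_univ.elim_finite_subcover U
    (fun z => (hUclopen z).2) (fun z _ => mem_iUnion.2 ⟨z, hUmem z⟩)
  set n := t.card with hn
  set e := t.equivFin with he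
  set A : Fin n → Set ↥K := fun i => U ((e.symm i : ↥t) : ↥K) with hA
  have hAclopen : ∀ i, IsClopen (A i) := fun i => hUclopen _
  -- disjointify
  set D : Fin n → Set ↥K := fun i => A i \ ⋃ j, ⋃ _ : j < i, A j with hD
  have hDclopen : ∀ i, IsClopen (D i) :=
    fun i => (hAclopen i).diff (Set.Finite.isClopen_biUnion (Set.toFinite _)
      (fun j _ => hAclopen j))
  have hDdisj : Pairwise fun i j => Disjoint (D i) (D j) := by
    intro i j hij
    rcases hij.lt_or_gt with h | h
    · refine Set.disjoint_left.2 fun z hzi hzj => hzj.2 ?_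
      exact Set.mem_biUnion h hzi.1
    · refine Set.disjoint_left.2 fun z hzi hzj => hzi.2 ?_
      exact Set.mem_biUnion h hzj.1
  have hDcover : (⋃ i, D i) = univ := by
    refine Set.eq_univ_of_forall fun z => ?_
    have hz : z ∈ ⋃ i ∈ t, U i := ht (mem_univ z)
    obtain ⟨w, hwt, hzw⟩ := Set.mem_iUnion₂.1 hz
    have hzA : ∃ i, z ∈ A i := ⟨e ⟨w, hwt⟩, by simp [hA]; simpa using hzw⟩
    set S : Finset (Fin n) := Finset.univ.filter (fun i => z ∈ A i) with hS
    have hSne : S.Nonempty := ⟨hzA.choose, by simp [hS, hzA.choose_spec]⟩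
    set i₀ := S.min' hSne with hi₀
    refine Set.mem_iUnion.2 ⟨i₀, ?_, ?_⟩
    · have : i₀ ∈ S := S.min'_mem hSne
      simpa [hS] using this
    · intro hmem
      obtain ⟨j, hj⟩ := Set.mem_iUnion.1 hmem
      obtain ⟨hlt, hzj⟩ := Set.mem_iUnion.1 hj
      have : i₀ ≤ j := S.min'_le j (by simp [hS, hzj])
      exact absurd hlt (not_lt.2 this)
  refine ⟨n, fun i => Subtype.val '' D i, ?_, ?_, ?_, ?_⟩
  · intro i
    exact (((hDclopen i).isClosed).isCompact).image continuous_subtype_val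
  · intro i j hij
    exact (Set.disjoint_image_iff Subtype.val_injective).2 (hDdisj hij)
  · rw [← Set.image_iUnion, hDcover, Set.image_univ, Subtype.range_val]
  · intro i
    rw [isometry_subtype_coe.diam_image]
    have h1 : D i ⊆ Metric.ball ((e.symm i : ↥t) : ↥K) (ε / 2) :=
      fun z hz => hUsub _ hz.1
    calc Metric.diam (D i) ≤ Metric.diam (Metric.ball ((e.symm i : ↥t) : ↥K) (ε / 2)) :=
          Metric.diam_mono h1 Metric.isBounded_ball
      _ ≤ 2 * (ε / 2) := Metric.diam_ball (by positivity)
      _ = ε := by ring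

/-- Let `g : Z → X` be a continuous surjection of compact metric spaces
all of whose fibers are totally disconnected (a zero-dimensional map), and suppose
`dim X` is finite. Then for every `ε > 0` there is `δ > 0` such that for every closed
`F ⊆ X` of diameter `< δ`, every connected component of `g ⁻¹' F` has diameter `< ε`. -/
theorem components_of_preimages_small
    {Z X : Type*} [MetricSpace Z] [CompactSpace Z] [MetricSpace X] [CompactSpace X]
    (g : Z → X) (hg : Continuous g) (hsurj : Function.Surjective g)
    (hfib : ∀ x : X, IsTotallyDisconnected (g ⁻¹' {x}))
    (hdim : ∃ n : ℕ, CovDimLE X n) :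
    ∀ ε > (0 : ℝ), ∃ δ > (0 : ℝ), ∀ F : Set X, IsClosed F → Metric.diam F < δ →
      ∀ z ∈ g ⁻¹' F, Metric.diam (connectedComponentIn (g ⁻¹' F) z) < ε := by
  classical
  intro ε hε
  -- For every `x` there is an open `U ∋ x` such that every nonempty connected subset of
  -- `g ⁻¹' U` has diameter `< ε`.
  have key : ∀ x : X, ∃ U : Set X, IsOpen U ∧ x ∈ U ∧
      ∀ s : Set Z, IsPreconnected s → s.Nonempty → s ⊆ g ⁻¹' U → Metric.diam s < ε := by
    intro x
    have hKc : IsCompact (g ⁻¹' {x}) := (isClosed_singleton.preimage hg).isCompact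
    obtain ⟨n, B, hBc, hBdisj, hBun, hBdiam⟩ :=
      exists_disjoint_compact_cover hKc (hfib x) (show (0:ℝ) < ε / 6 by positivity)
    -- choose a common thickening radius
    have hpair : ∀ p : {p : Fin n × Fin n // p.1 ≠ p.2},
        ∃ d : ℝ, 0 < d ∧ Disjoint (Metric.thickening d (B p.1.1))
          (Metric.thickening d (B p.1.2)) :=
      fun p => by
        obtain ⟨d, hd, h⟩ := (hBdisj p.2).exists_thickenings (hBc _) (hBc _).isClosed
        exact ⟨d, hd, h⟩
    choose d hd hdisj using hpair
    set f : Option {p : Fin n × Fin n // p.1 ≠ p.2} → ℝ :=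
      fun o => o.elim (ε / 6) d with hf
    obtain ⟨o₀, ho₀⟩ := Finite.exists_min f
    set r := f o₀ with hr
    have hr0 : 0 < r := by
      rcases o₀ with _ | p
      · simpa [hf, hr] using (show (0:ℝ) < ε / 6 by positivity)
      · simpa [hf, hr] using hd p
    have hrε : r ≤ ε / 6 := by simpa [hf] using ho₀ none
    set V : Fin n → Set Z := fun i => Metric.thickening r (B i) with hV
    have hVopen : ∀ i, IsOpen (V i) := fun i => Metric.isOpen_thickening
    have hVdisj : Pairwise fun i j => Disjoint (V i) (V j) := by
      intro i j hij
      have hle : r ≤ d ⟨(i, j), hij⟩ := by simpa [hf] using ho₀ (some ⟨(i, j), hij⟩)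
      exact (hdisj ⟨(i, j), hij⟩).mono (Metric.thickening_mono hle _)
        (Metric.thickening_mono hle _)
    have hVdiam : ∀ i, Metric.diam (V i) < ε := by
      intro i
      calc Metric.diam (V i) ≤ Metric.diam (B i) + 2 * r :=
            Metric.diam_thickening_le _ hr0.le
        _ ≤ ε / 6 + 2 * (ε / 6) := by
            have := hBdiam i; nlinarith
        _ < ε := by linarith
    set W : Set Z := ⋃ i, V i with hW
    have hKW : g ⁻¹' {x} ⊆ W := by
      rw [← hBun]
      exact Set.iUnion_mono fun i => Metric.self_subset_thickening hr0 _
    -- the open neighborhood of x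
    refine ⟨(g '' Wᶜ)ᶜ, ?_, ?_, ?_⟩
    · have : IsCompact (Wᶜ) := (isOpen_iUnion hVopen).isClosed_compl.isCompact
      exact (this.image hg).isClosed.isOpen_compl
    · intro hx
      obtain ⟨z, hz, hzx⟩ := hx
      exact hz (hKW (by simp [hzx]))
    · intro s hs hsne hsub
      have hsW : s ⊆ W := by
        intro z hz
        by_contra hzW
        exact (hsub hz) ⟨z, hzW, rfl⟩
      obtain ⟨z₀, hz₀⟩ := hsne
      obtain ⟨i, hz₀i⟩ := Set.mem_iUnion.1 (hsW hz₀)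
      have hsVi : s ⊆ V i := by
        set T : Set Z := ⋃ j ∈ {j : Fin n | j ≠ i}, V j with hT
        have hTopen : IsOpen T := isOpen_biUnion fun j _ => hVopen j
        have hdisjT : Disjoint (V i) T :=
          Set.disjoint_iUnion₂_right.2 fun j hj => hVdisj (Ne.symm hj)
        have hsub2 : s ⊆ V i ∪ T := by
          intro z hz
          obtain ⟨j, hzj⟩ := Set.mem_iUnion.1 (hsW hz)
          by_cases hji : j = i
          · exact Or.inl (hji ▸ hzj)
          · exact Or.inr (Set.mem_biUnion hji hzj)
        exact hs.subset_left_of_subset_union (hVopen i) hTopen hdisjT hsub2 ⟨z₀, hz₀, hz₀i⟩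
      calc Metric.diam s ≤ Metric.diam (V i) :=
            Metric.diam_mono hsVi (isCompact_univ.isBounded.subset (Set.subset_univ _))
        _ < ε := hVdiam i
  choose U hUopen hUmem hUsmall using key
  obtain ⟨δ, hδ0, hδ⟩ := lebesgue_number_lemma_of_metric isCompact_univ hUopen
    (fun x _ => Set.mem_iUnion.2 ⟨x, hUmem x⟩)
  refine ⟨δ, hδ0, fun F hF hFdiam z hz => ?_⟩
  obtain ⟨x, hx⟩ := hδ (g z) (Set.mem_univ _)
  have hFsub : F ⊆ U x := fun y hy => hx <| by
    simp only [Metric.mem_ball]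
    exact lt_of_le_of_lt (Metric.dist_le_diam_of_mem
      (isCompact_univ.isBounded.subset (Set.subset_univ _)) hy hz) hFdiam
  exact hUsmall x _ isPreconnected_connectedComponentIn
    ⟨z, mem_connectedComponentIn hz⟩
    ((connectedComponentIn_subset _ _).trans fun w hw => hFsub hw)
end

section
/- Let X be a compact metric space, A ⊆ X closed, and f : A → S¹ a continuous map. Suppose g : S¹ → S¹ is the k-fold covering map z ↦ z^k and that g ∘ f extends to a continuous map φ : X → S¹. Let Z = {(x, s) ∈ X × S¹ : φ(x) = g(s)} be the pull-back with projections h : Z → X and ψ : Z → S¹. Then the map f ∘ (h restricted to h⁻¹(A)) : h⁻¹(A) → S¹ extends to a continuous map Z → S¹. -/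
/-- Let `X` be a compact metric space, `A ⊆ X` closed, `f : A → S¹`
continuous. Suppose the `k`-fold power `x ↦ (f x)^k` extends to a continuous
`φ : X → S¹`. Let `Z = {(x,s) ∈ X × S¹ : φ x = s^k}` be the pull-back, with projection
`h (x,s) = x`. Then `f ∘ (h restricted to h⁻¹(A))` extends to a continuous map
`Z → S¹`. -/
theorem pullback_extension_circle
    {X : Type*} [MetricSpace X] [CompactSpace X]
    (A : Set X) (hA : IsClosed A) (f : A → Circle) (hf : Continuous f)
    (k : ℕ) (hk : 1 ≤ k) (φ : X → Circle) (hφ : Continuous φ)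
    (hext : ∀ a : A, φ a = (f a) ^ k) :
    ∃ F : { p : X × Circle // φ p.1 = p.2 ^ k } → Circle,
      Continuous F ∧
      ∀ (w : { p : X × Circle // φ p.1 = p.2 ^ k }) (hw : w.1.1 ∈ A),
        F w = f ⟨w.1.1, hw⟩ := by
  set Z := { p : X × Circle // φ p.1 = p.2 ^ k } with hZ
  -- the closed set h⁻¹(A) in Z
  set S : Set Z := {w | w.1.1 ∈ A} with hSdef
  have hproj : Continuous fun w : Z => w.1.1 := (continuous_fst.comp continuous_subtype_val)
  have hS : IsClosed S := hA.preimage hproj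
  -- the "ratio" map u = f(x) * s⁻¹ on S, taking values in k-th roots of unity
  let u : S → Circle := fun w => f ⟨w.1.1.1, w.2⟩ * (w.1.1.2)⁻¹
  have hu : Continuous u := by
    apply Continuous.mul
    · exact hf.comp (Continuous.subtype_mk (hproj.comp continuous_subtype_val) _)
    · exact ((continuous_snd.comp continuous_subtype_val).comp continuous_subtype_val).inv
  have huk : ∀ w : S, (u w) ^ k = 1 := by
    intro w
    have h1 : φ w.1.1.1 = w.1.1.2 ^ k := w.1.2
    have h2 : φ w.1.1.1 = f ⟨w.1.1.1, w.2⟩ ^ k := hext ⟨w.1.1.1, w.2⟩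
    have : f ⟨w.1.1.1, w.2⟩ ^ k = w.1.1.2 ^ k := h2.symm.trans h1
    calc (u w) ^ k = f ⟨w.1.1.1, w.2⟩ ^ k * ((w.1.1.2) ^ k)⁻¹ := by
          simp [u, mul_pow, inv_pow]
      _ = 1 := by rw [this, mul_inv_cancel]
  -- the k-th roots of unity in Circle form a finite (hence discrete) set
  have hfinC : (Set.Finite {z : ℂ | z ^ k = 1}) := by
    have hne : (Polynomial.X ^ k - Polynomial.C (1 : ℂ)) ≠ 0 :=
      Polynomial.X_pow_sub_C_ne_zero (by omega) 1
    refine (Polynomial.finite_setOf_isRoot hne).subset ?_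
    intro z hz
    simp only [Set.mem_setOf_eq] at hz ⊢
    simp [Polynomial.IsRoot, hz]
  haveI := hfinC.to_subtype
  have hfin : Finite {z : Circle // z ^ k = 1} := by
    refine Finite.of_injective
      (fun z : {z : Circle // z ^ k = 1} =>
        (⟨(z.1 : ℂ), by
          have : ((z.1 ^ k : Circle) : ℂ) = ((1 : Circle) : ℂ) := by rw [z.2]
          exact this⟩ : {z : ℂ | z ^ k = 1})) ?_
    intro a b hab
    apply Subtype.ext
    apply Subtype.ext
    simpa using congrArg Subtype.val hab
  haveI := hfin
  -- the map into roots of unity, hence locally constant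
  let v : S → {z : Circle // z ^ k = 1} := fun w => ⟨u w, huk w⟩
  have hv : Continuous v := hu.subtype_mk _
  -- the angle function, continuous since the roots of unity are discrete
  let θ : S → ℝ := (fun z : {z : Circle // z ^ k = 1} => Complex.arg (z.1 : ℂ)) ∘ v
  have hθ : Continuous θ := (continuous_of_discreteTopology).comp hv
  -- Tietze extension of θ to all of Z
  obtain ⟨Θ, hΘ⟩ := ContinuousMap.exists_restrict_eq (Y := ℝ) hS ⟨θ, hθ⟩
  -- the desired map
  refine ⟨fun w => w.1.2 * Circle.exp (Θ w), ?_, ?_⟩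
  · exact (continuous_snd.comp continuous_subtype_val).mul
      (Circle.exp.continuous.comp Θ.continuous)
  · intro w hw
    have hΘw : Θ w = θ ⟨w, hw⟩ := by
      have := congrFun (congrArg DFunLike.coe hΘ) ⟨w, hw⟩
      simpa using this
    show w.1.2 * Circle.exp (Θ w) = f ⟨w.1.1, hw⟩
    rw [hΘw]
    have : Circle.exp (θ ⟨w, hw⟩) = u ⟨w, hw⟩ := by
      simp only [θ, v, Function.comp_apply]
      exact Circle.exp_arg _
    rw [this]
    show w.1.2 * (f ⟨w.1.1, hw⟩ * (w.1.2)⁻¹) = f ⟨w.1.1, hw⟩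
    rw [mul_comm, inv_mul_cancel_right]
end

section
/- Let X be a compact metric space and A ⊆ X closed. If f₀ : A → S¹ is homotopic to the restriction to A of a continuous map F : X → S¹, then f₀ extends to a continuous map X → S¹. -/
open Complex Set

/-- A point of the unit circle other than `-1` lies in the slit plane. -/
lemma circle_mem_slitPlane {w : Circle} (hw : (w : ℂ) ≠ -1) : (w : ℂ) ∈ Complex.slitPlane := by
  rw [Complex.mem_slitPlane_iff]
  by_contra hcon
  push_neg at hcon
  obtain ⟨hre, him⟩ := hcon
  have habs : ‖(w : ℂ)‖ = 1 := Circle.norm_coe w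
  have hw' : (w : ℂ) = ((w : ℂ).re : ℂ) := by
    apply Complex.ext <;> simp [him]
  rw [hw', Complex.norm_real, Real.norm_eq_abs] at habs
  have : (w : ℂ).re = -1 := by
    rcases abs_eq (by norm_num : (0:ℝ) ≤ 1) |>.mp habs with h1 | h1
    · linarith
    · exact h1
  apply hw
  rw [hw', this]
  norm_num

lemma circle_exp_sum_arg (m : ℕ) (v : ℕ → Circle) :
    Circle.exp (∑ i ∈ Finset.range m, Complex.arg (v i)) = ∏ i ∈ Finset.range m, v i := by
  induction m with
  | zero => simp
  | succ k ih =>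
    rw [Finset.sum_range_succ, Finset.prod_range_succ, Circle.exp_add, ih, Circle.exp_arg]

/-- Borsuk homotopy extension property for `S¹`: Let `X` be a compact
metric space, `A ⊆ X` closed, and `f₀ : A → S¹` continuous. If `f₀` is homotopic to the
restriction to `A` of a continuous map `F : X → S¹`, then `f₀` extends to a continuous
map `X → S¹`. -/
theorem homotopic_to_restriction_extends
    {X : Type*} [MetricSpace X] [CompactSpace X]
    (A : Set X) (hA : IsClosed A) (f₀ : A → Circle) (hf₀ : Continuous f₀)
    (F : X → Circle) (hF : Continuous F)
    (h : ContinuousMap.Homotopic ⟨f₀, hf₀⟩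
        ⟨fun a : A => F a, hF.comp continuous_subtype_val⟩) :
    ∃ G : X → Circle, Continuous G ∧ ∀ a : A, G a = f₀ a := by
  haveI : CompactSpace A := isCompact_iff_compactSpace.mp hA.isCompact
  obtain ⟨H⟩ := h
  -- uniform continuity of the homotopy
  have hu : UniformContinuous fun p : unitInterval × A => H p :=
    CompactSpace.uniformContinuous_of_continuous H.continuous
  obtain ⟨δ, hδ, hδ2⟩ := Metric.uniformContinuous_iff.mp hu 2 (by norm_num)
  obtain ⟨n, hn⟩ := exists_nat_gt (1 / δ)
  have hn0 : 0 < (n : ℝ) := lt_trans (by positivity) hn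
  have hinv : 1 / (n : ℝ) < δ := by
    rw [div_lt_iff₀ hn0]
    rw [div_lt_iff₀ hδ] at hn
    nlinarith
  -- partition points
  set τ : ℕ → unitInterval := fun i => Set.projIcc 0 1 zero_le_one ((i : ℝ) / n) with hτ
  have hτ0 : τ 0 = 0 := by
    simp [hτ, Set.projIcc]
  have hτn : τ n = 1 := by
    simp [hτ, div_self (ne_of_gt hn0), Set.projIcc]
  have hdist : ∀ i, dist (τ i) (τ (i + 1)) < δ := by
    intro i
    calc dist (τ i) (τ (i + 1)) ≤ dist ((i : ℝ) / n) (((i : ℝ) + 1) / n) := by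
          simpa [hτ] using (LipschitzWith.projIcc (zero_le_one)).dist_le_mul
            ((i : ℝ) / n) (((i : ℝ) + 1) / n)
      _ < δ := by
          rw [Real.dist_eq, div_sub_div_same]
          rw [show (i : ℝ) - ((i : ℝ) + 1) = -1 by ring]
          simpa [abs_div, abs_of_pos hn0] using hinv
  -- consecutive values are never antipodal
  have hclose : ∀ (i : ℕ) (a : A), dist (H (τ i, a)) (H (τ (i + 1), a)) < 2 := by
    intro i a
    apply hδ2
    rw [Prod.dist_eq]
    apply max_lt (hdist i)
    simpa using hδ
  have hne : ∀ (i : ℕ) (a : A),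
      ((H (τ i, a) / H (τ (i + 1), a) : Circle) : ℂ) ≠ -1 := by
    intro i a hcon
    have h2 : (H (τ i, a) : ℂ) = -(H (τ (i + 1), a) : ℂ) := by
      have hcoe : (H (τ i, a) : ℂ) / (H (τ (i + 1), a) : ℂ) = -1 := by
        rw [← Circle.coe_div]; exact_mod_cast hcon
      rw [div_eq_iff (Circle.coe_ne_zero _)] at hcoe
      linear_combination hcoe
    have := hclose i a
    rw [show dist (H (τ i, a)) (H (τ (i + 1), a)) = dist (H (τ i, a) : ℂ) (H (τ (i + 1), a) : ℂ) from rfl, Complex.dist_eq, h2] at this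
    have habs : ‖(-(H (τ (i + 1), a) : ℂ) - (H (τ (i + 1), a) : ℂ))‖ = 2 := by
      rw [show -(H (τ (i + 1), a) : ℂ) - (H (τ (i + 1), a) : ℂ)
            = -(2 : ℂ) * (H (τ (i + 1), a) : ℂ) by ring]
      simp [Circle.norm_coe]
    rw [habs] at this
    exact lt_irrefl _ this
  -- the continuous logarithm on A
  set g : A → ℝ := fun a =>
    ∑ i ∈ Finset.range n, Complex.arg ((H (τ i, a) / H (τ (i + 1), a) : Circle) : ℂ) with hg
  have hgc : Continuous g := by
    apply continuous_finset_sum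
    intro i _
    rw [continuous_iff_continuousAt]
    intro a
    have hr : Continuous fun a : A => ((H (τ i, a) / H (τ (i + 1), a) : Circle) : ℂ) := by
      apply Continuous.subtype_val
      have h1 : Continuous fun a : A => H (τ i, a) :=
        H.continuous.comp (continuous_const.prodMk continuous_id)
      have h2 : Continuous fun a : A => H (τ (i + 1), a) :=
        H.continuous.comp (continuous_const.prodMk continuous_id)
      exact h1.div' h2
    exact ContinuousAt.comp
      (f := fun a : A => ((H (τ i, a) / H (τ (i + 1), a) : Circle) : ℂ))
      (Complex.continuousAt_arg (circle_mem_slitPlane (hne i a))) hr.continuousAt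
  -- key identity : exp (g a) = f₀ a / F a
  have hkey : ∀ a : A, Circle.exp (g a) = f₀ a / F a := by
    intro a
    rw [hg]
    rw [circle_exp_sum_arg n (fun i => H (τ i, a) / H (τ (i + 1), a))]
    rw [Finset.prod_range_div' (fun i => H (τ i, a))]
    rw [hτ0, hτn, H.apply_zero, H.apply_one]
    rfl
  -- Tietze extension
  obtain ⟨g', hg'⟩ := ContinuousMap.exists_restrict_eq (Y := ℝ) hA ⟨g, hgc⟩
  refine ⟨fun x => F x * Circle.exp (g' x), hF.mul (Circle.exp.continuous.comp g'.continuous), ?_⟩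
  intro a
  have hga : g' a = g a := by
    have := congrFun (congrArg DFunLike.coe hg') a
    simpa using this
  show F ↑a * Circle.exp (g' ↑a) = f₀ a
  rw [hga, hkey a, mul_div, mul_comm, mul_div_assoc, div_self', mul_one]
end

section
/- Every compact metric space F with dim F ≥ 2 admits a closed subset A ⊆ F and a continuous map f : A → S¹ that does not extend to a continuous map F → S¹. -/
/-!
If `S¹` is an absolute extensor for a perfectly normal space `X`, then every open cover
`U₀ ∪ U₁ ∪ U₂` of `X` has an open shrinking with empty triple intersection. Choose `dᵢ ≥ 0`
vanishing exactly off `Uᵢ` and put `f = ∑ dᵢ • wᵢ`, where the `wᵢ` are the vertices of a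
triangle around `0`. If `ℓᵢ` is the linear form that is constant on the edge opposite `wᵢ`,
then `ℓᵢ (f x) = ∑ dⱼ x - 3 dᵢ x`, so `f` does not vanish on the closed set `A = ⋃ Uᵢᶜ`, and
`f / ‖f‖` extends to some `g : X → S¹`. The sets `Vᵢ = {x | ℓᵢ (g x) is not the largest of
the three}` work: off `Uᵢ` the form `ℓᵢ` is largest at `f x`, hence at `g x`; some form is
always largest; and since `∑ ℓᵢ = 0`, the three forms agree only at `0 ∉ S¹`.

Killing the triple intersections of a finite open cover one triple at a time then yields a
refinement of order at most `2`.
-/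

open Set Complex

def IsAbsoluteExtensorFor (Y X : Type*) [TopologicalSpace Y] [TopologicalSpace X] : Prop :=
  ∀ A : Set X, IsClosed A → ∀ f : A → Y, Continuous f →
    ∃ g : X → Y, Continuous g ∧ ∀ a : A, g a = f a

def IsOpenShrinking {X ι : Type*} [TopologicalSpace X] (V U : ι → Set X) : Prop :=
  (∀ i, IsOpen (V i)) ∧ (∀ i, V i ⊆ U i) ∧ ⋃ i, V i = univ

def TripleCoversShrinkToEmptyInter (X : Type*) [TopologicalSpace X] : Prop :=
  ∀ U : Fin 3 → Set X, (∀ i, IsOpen (U i)) → ⋃ i, U i = univ →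
    ∃ V, IsOpenShrinking V U ∧ ⋂ i, V i = ∅

noncomputable def triangleVertex : Fin 3 → ℂ := ![1, I, -1 - I]

noncomputable def triangleEdgeForm : Fin 3 → ℂ →L[ℝ] ℝ :=
  ![imCLM - 2 • reCLM, reCLM - 2 • imCLM, reCLM + imCLM]

lemma triangleEdgeForm_vertex (i j : Fin 3) :
    triangleEdgeForm i (triangleVertex j) = if i = j then -2 else 1 := by
  fin_cases i <;> fin_cases j <;> norm_num [triangleEdgeForm, triangleVertex]

lemma triangleEdgeForm_sum_smul_vertex (d : Fin 3 → ℝ) (i : Fin 3) :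
    triangleEdgeForm i (∑ j, d j • triangleVertex j) = ∑ j, d j - 3 * d i := by
  rw [map_sum]
  simp only [map_smul, smul_eq_mul, triangleEdgeForm_vertex, Fin.sum_univ_three]
  fin_cases i <;> simp only [Fin.isValue, Fin.reduceFinMk, Fin.reduceEq, ↓reduceIte] <;> ring

lemma exists_triangleEdgeForm_lt {z : ℂ} (hz : z ≠ 0) :
    ∃ i j, triangleEdgeForm i z < triangleEdgeForm j z := by
  by_contra! h
  have h₀₁ : z.re - 2 * z.im = z.im - 2 * z.re := by
    simpa [triangleEdgeForm] using le_antisymm (h 0 1) (h 1 0)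
  have h₁₂ : z.re + z.im = z.re - 2 * z.im := by
    simpa [triangleEdgeForm] using le_antisymm (h 1 2) (h 2 1)
  exact hz (Complex.ext (by rw [zero_re]; linarith) (by rw [zero_im]; linarith))

lemma triangleEdgeForm_le_of_weight_eq_zero {d : Fin 3 → ℝ} (hd : ∀ k, 0 ≤ d k) {i : Fin 3}
    (hi : d i = 0) (j : Fin 3) :
    triangleEdgeForm j (∑ k, d k • triangleVertex k) ≤
      triangleEdgeForm i (∑ k, d k • triangleVertex k) := by
  rw [triangleEdgeForm_sum_smul_vertex, triangleEdgeForm_sum_smul_vertex, hi]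
  linarith [hd j]

lemma weight_eq_of_sum_smul_triangleVertex_eq_zero {d : Fin 3 → ℝ}
    (h : ∑ k, d k • triangleVertex k = 0) (i j : Fin 3) : d i = d j := by
  have hi := triangleEdgeForm_sum_smul_vertex d i
  have hj := triangleEdgeForm_sum_smul_vertex d j
  rw [h, map_zero] at hi hj
  linarith

lemma exists_continuous_circle_coe_eq_smul {Y : Type*} [TopologicalSpace Y] {f : Y → ℂ}
    (hf : Continuous f) (hf₀ : ∀ y, f y ≠ 0) :
    ∃ φ : Y → Circle, Continuous φ ∧ ∀ y, (φ y : ℂ) = ‖f y‖⁻¹ • f y := by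
  refine ⟨fun y => ⟨‖f y‖⁻¹ • f y, ?_⟩, ?_, fun y => rfl⟩
  · simp [Submonoid.unitSphere, hf₀ y]
  · exact Continuous.subtype_mk ((hf.norm.inv₀ fun y => norm_ne_zero_iff.2 (hf₀ y)).smul hf) _

lemma exists_isOpenShrinking_iInter_eq_empty_of_circle_map {X : Type*} [TopologicalSpace X]
    {g : X → Circle} (hg : Continuous g) {U : Fin 3 → Set X}
    (hgU : ∀ i, ∀ x ∉ U i, ∀ j, triangleEdgeForm j (g x) ≤ triangleEdgeForm i (g x)) :
    ∃ V, IsOpenShrinking V U ∧ ⋂ i, V i = ∅ := by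
  set ℓ := triangleEdgeForm
  have hℓg (i : Fin 3) : Continuous fun x => ℓ i (g x) := by fun_prop
  refine ⟨fun i => ⋃ j, {x | ℓ i (g x) < ℓ j (g x)}, ⟨fun i => ?_, fun i x hx => ?_, ?_⟩, ?_⟩
  · exact isOpen_iUnion fun j => isOpen_lt (hℓg i) (hℓg j)
  · by_contra hxU
    obtain ⟨j, hj⟩ := mem_iUnion.1 hx
    exact (hgU i x hxU j).not_gt hj
  · refine eq_univ_of_forall fun x => ?_
    obtain ⟨i, j, hij⟩ := exists_triangleEdgeForm_lt (g x).coe_ne_zero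
    exact mem_iUnion.2 ⟨i, mem_iUnion.2 ⟨j, hij⟩⟩
  · refine eq_empty_of_forall_notMem fun x hx => ?_
    obtain ⟨i, hi⟩ := Finite.exists_max fun i => ℓ i (g x)
    obtain ⟨j, hj⟩ := mem_iUnion.1 (mem_iInter.1 hx i)
    exact (hi j).not_gt hj

theorem tripleCoversShrinkToEmptyInter_of_isAbsoluteExtensorFor_circle {X : Type*}
    [TopologicalSpace X] [PerfectlyNormalSpace X] (hX : IsAbsoluteExtensorFor Circle X) :
    TripleCoversShrinkToEmptyInter X := by
  intro U hUo hU
  choose d hd₀ hd using fun i => perfectlyNormalSpace_iff_forall_isClosed_preimage_zero.1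
    ‹_› _ (hUo i).isClosed_compl
  have hd_eq_zero {i : Fin 3} {x : X} : d i x = 0 ↔ x ∉ U i := by
    rw [← mem_compl_iff, hd₀ i]; rfl
  set f : X → ℂ := fun x => ∑ k, d k x • triangleVertex k
  set A := ⋃ i, (U i)ᶜ
  have hA : IsClosed A := isClosed_iUnion_of_finite fun i => (hUo i).isClosed_compl
  have hfA (a : A) : f a ≠ 0 := by
    intro hfa
    obtain ⟨k, hk⟩ := mem_iUnion.1 a.2
    obtain ⟨i, hi⟩ := mem_iUnion.1 (hU ▸ mem_univ (a : X))
    exact hd_eq_zero.1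
      ((weight_eq_of_sum_smul_triangleVertex_eq_zero hfa i k).trans (hd_eq_zero.2 hk)) hi
  obtain ⟨φ, hφ, hφf⟩ := exists_continuous_circle_coe_eq_smul
    (by fun_prop : Continuous fun a : A => f a) hfA
  obtain ⟨g, hg, hgφ⟩ := hX A hA φ hφ
  refine exists_isOpenShrinking_iInter_eq_empty_of_circle_map hg fun i x hxU j => ?_
  rw [hgφ ⟨x, mem_iUnion.2 ⟨i, hxU⟩⟩, hφf, map_smul, map_smul, smul_eq_mul, smul_eq_mul]
  exact mul_le_mul_of_nonneg_left
    (triangleEdgeForm_le_of_weight_eq_zero (fun k => (hd k x).1) (hd_eq_zero.2 hxU) j)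
    (by positivity)

section Shrinking

variable {X ι : Type*} [TopologicalSpace X]

lemma IsOpenShrinking.trans {W V U : ι → Set X} (hWV : IsOpenShrinking W V)
    (hVU : IsOpenShrinking V U) : IsOpenShrinking W U :=
  ⟨hWV.1, fun i => (hWV.2.1 i).trans (hVU.2.1 i), hWV.2.2⟩

lemma exists_isOpenShrinking_inter_inter_eq_empty [DecidableEq ι]
    (h3 : TripleCoversShrinkToEmptyInter X)
    {W : ι → Set X} (hWo : ∀ m, IsOpen (W m)) (hW : ⋃ m, W m = univ)
    {i j k : ι} (hij : i ≠ j) (hik : i ≠ k) (hjk : j ≠ k) :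
    ∃ V, IsOpenShrinking V W ∧ V i ∩ V j ∩ V k = ∅ := by
  set R := ⋃ m ∈ ({i, j}ᶜ : Set ι), W m
  have hRo : IsOpen R := isOpen_biUnion fun m _ => hWo m
  have hcov : ⋃ n, ![W i, W j, R] n = univ := by
    refine eq_univ_of_forall fun x => ?_
    obtain ⟨m, hm⟩ := mem_iUnion.1 (hW ▸ mem_univ x)
    simp only [mem_iUnion, Fin.exists_fin_succ]
    by_cases hmi : m = i
    · exact Or.inl (hmi ▸ hm)
    by_cases hmj : m = j
    · exact Or.inr (Or.inl (hmj ▸ hm))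
    · exact Or.inr (Or.inr (Or.inl (mem_biUnion (by simp [hmi, hmj]) hm)))
  obtain ⟨V, ⟨hVo, hVU, hV⟩, hVe⟩ :=
    h3 ![W i, W j, R] (by simp [Fin.forall_fin_succ, hWo, hRo]) hcov
  refine ⟨fun m => if m = i then V 0 else if m = j then V 1 else V 2 ∩ W m, ⟨?_, ?_, ?_⟩, ?_⟩
  · intro m
    dsimp only
    split_ifs
    exacts [hVo 0, hVo 1, (hVo 2).inter (hWo m)]
  · intro m
    dsimp only
    split_ifs with hmi hmj
    · exact hmi ▸ hVU 0
    · exact hmj ▸ hVU 1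
    · exact inter_subset_right
  · refine eq_univ_of_forall fun x => ?_
    obtain ⟨n, hn⟩ := mem_iUnion.1 (hV ▸ mem_univ x)
    fin_cases n
    · exact mem_iUnion.2 ⟨i, by simpa using hn⟩
    · exact mem_iUnion.2 ⟨j, by simpa [hij.symm] using hn⟩
    · obtain ⟨m, hm, hxm⟩ := mem_iUnion₂.1 (hVU 2 hn)
      simp only [mem_compl_iff, mem_insert_iff, mem_singleton_iff, not_or] at hm
      exact mem_iUnion.2 ⟨m, by simpa [hm.1, hm.2] using ⟨hn, hxm⟩⟩
  · refine eq_empty_of_forall_notMem fun x ⟨⟨hxi, hxj⟩, hxk⟩ => ?_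
    simp only [hij.symm, hik.symm, hjk.symm, if_true, if_false] at hxi hxj hxk
    refine (eq_empty_iff_forall_notMem.1 hVe) x (mem_iInter.2 fun n => ?_)
    fin_cases n
    exacts [hxi, hxj, hxk.1]

lemma exists_isOpenShrinking_forall_inter_inter_eq_empty [DecidableEq ι]
    (h3 : TripleCoversShrinkToEmptyInter X)
    (S : Finset (ι × ι × ι)) {W : ι → Set X} (hWo : ∀ m, IsOpen (W m)) (hW : ⋃ m, W m = univ) :
    ∃ V, IsOpenShrinking V W ∧ ∀ p ∈ S, p.1 ≠ p.2.1 → p.1 ≠ p.2.2 → p.2.1 ≠ p.2.2 →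
      V p.1 ∩ V p.2.1 ∩ V p.2.2 = ∅ := by
  induction S using Finset.induction_on with
  | empty => exact ⟨W, ⟨hWo, fun _ => subset_rfl, hW⟩, by simp⟩
  | @insert p S _ ih =>
    obtain ⟨V, hVW, hVS⟩ := ih
    by_cases hp : p.1 ≠ p.2.1 ∧ p.1 ≠ p.2.2 ∧ p.2.1 ≠ p.2.2
    · obtain ⟨V', hV'V, hV'p⟩ := exists_isOpenShrinking_inter_inter_eq_empty h3 hVW.1 hVW.2.2
        hp.1 hp.2.1 hp.2.2
      refine ⟨V', hV'V.trans hVW, fun q hq h₁ h₂ h₃ => ?_⟩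
      rcases Finset.mem_insert.1 hq with rfl | hq
      · exact hV'p
      · have h := hV'V.2.1
        exact eq_empty_of_subset_empty <| (hVS q hq h₁ h₂ h₃) ▸
          inter_subset_inter (inter_subset_inter (h _) (h _)) (h _)
    · refine ⟨V, hVW, fun q hq h₁ h₂ h₃ => ?_⟩
      rcases Finset.mem_insert.1 hq with rfl | hq
      · exact absurd ⟨h₁, h₂, h₃⟩ hp
      · exact hVS q hq h₁ h₂ h₃

theorem covDimLE_one_of_tripleCoversShrinkToEmptyInter
    (h3 : TripleCoversShrinkToEmptyInter X) :
    CovDimLE X 1 := by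
  classical
  intro U hUo hU
  obtain ⟨V, ⟨hVo, hVU, hV⟩, hV3⟩ := exists_isOpenShrinking_forall_inter_inter_eq_empty h3
    (Finset.univ : Finset (U × U × U)) (W := Subtype.val) (fun m => hUo m m.2)
    (by rw [← hU, sUnion_eq_iUnion]; rfl)
  refine ⟨Finset.univ.image V, ?_, ?_, ?_, fun x => ?_⟩
  · simp only [Finset.mem_image, Finset.mem_univ, true_and]
    rintro _ ⟨m, rfl⟩
    exact hVo m
  · simpa [sUnion_range] using hV
  · simp only [Finset.mem_image, Finset.mem_univ, true_and]
    rintro _ ⟨m, rfl⟩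
    exact ⟨m, m.2, hVU m⟩
  · have hsub : {v ∈ (↑(Finset.univ.image V) : Set (Set X)) | x ∈ v} ⊆ V '' {m | x ∈ V m} := by
      rintro _ ⟨hv, hxv⟩
      obtain ⟨m, -, rfl⟩ := Finset.mem_image.1 hv
      exact ⟨m, hxv, rfl⟩
    have hle : {m | x ∈ V m}.ncard ≤ 2 := by
      refine not_lt.1 fun h => ?_
      obtain ⟨a, b, c, ha, hb, hc, hab, hac, hbc⟩ := (two_lt_ncard_iff (toFinite _)).1 h
      exact (hV3 (a, b, c) (Finset.mem_univ _) hab hac hbc).subset ⟨⟨ha, hb⟩, hc⟩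
    exact ((ncard_le_ncard hsub (toFinite _)).trans (ncard_image_le (toFinite _))).trans hle

end Shrinking

theorem exists_nonextendable_circle_map_of_dim_ge_two_general
    {F : Type*} [MetricSpace F] (hF : ¬ CovDimLE F 1) :
    ∃ A : Set F, IsClosed A ∧ ∃ f : A → Circle, Continuous f ∧
      ¬ ∃ g : F → Circle, Continuous g ∧ ∀ a : A, g a = f a := by
  by_contra! hext
  exact hF (covDimLE_one_of_tripleCoversShrinkToEmptyInter
    (tripleCoversShrinkToEmptyInter_of_isAbsoluteExtensorFor_circle hext))

/-- Every compact metric space `F` with `dim F ≥ 2` admits a closed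
subset `A ⊆ F` and a continuous map `f : A → S¹` that does not extend to a continuous
map `F → S¹`. -/
theorem exists_nonextendable_circle_map_of_dim_ge_two
    {F : Type*} [MetricSpace F] [CompactSpace F] (hF : ¬ CovDimLE F 1) :
    ∃ A : Set F, IsClosed A ∧ ∃ f : A → Circle, Continuous f ∧
      ¬ ∃ g : F → Circle, Continuous g ∧ ∀ a : A, g a = f a :=
  exists_nonextendable_circle_map_of_dim_ge_two_general hF
end

section
/- Let X be a compact metric space with dim X ≥ 2 such that for every closed A ⊆ X and every continuous f : A → S¹ there exists k ≥ 1 such that f^k (the map x ↦ f(x)^k) extends continuously over X. Then for every closed F ⊆ X with dim F ≥ 2 there exist a closed A ⊆ F and a continuous f : A → S¹ such that f does not extend continuously over F, yet f^k extends continuously over X for some k ≥ 1. -/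
open Metric Set


private lemma triple_shrink {Y : Type*} [MetricSpace Y]
    (E : ∀ C : Set Y, IsClosed C → ∀ φ : C → Circle, Continuous φ →
      ∃ g : Y → Circle, Continuous g ∧ ∀ c : C, g c = φ c)
    (u₁ u₂ u₃ : Set Y) (h₁ : IsOpen u₁) (h₂ : IsOpen u₂) (h₃ : IsOpen u₃)
    (hcov : ∀ y, y ∈ u₁ ∨ y ∈ u₂ ∨ y ∈ u₃) :
    ∃ v₁ v₂ v₃ : Set Y, IsOpen v₁ ∧ IsOpen v₂ ∧ IsOpen v₃ ∧
      v₁ ⊆ u₁ ∧ v₂ ⊆ u₂ ∧ v₃ ⊆ u₃ ∧ (∀ y, y ∈ v₁ ∨ y ∈ v₂ ∨ y ∈ v₃) ∧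
      v₁ ∩ v₂ ∩ v₃ = ∅ := by
  classical
  by_cases e₁ : u₁ = univ
  · exact ⟨univ, ∅, ∅, isOpen_univ, isOpen_empty, isOpen_empty, by simp [e₁], by simp, by simp,
      fun y => Or.inl trivial, by simp⟩
  by_cases e₂ : u₂ = univ
  · exact ⟨∅, univ, ∅, isOpen_empty, isOpen_univ, isOpen_empty, by simp, by simp [e₂], by simp,
      fun y => Or.inr (Or.inl trivial), by simp⟩
  by_cases e₃ : u₃ = univ
  · exact ⟨∅, ∅, univ, isOpen_empty, isOpen_empty, isOpen_univ, by simp, by simp, by simp [e₃],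
      fun y => Or.inr (Or.inr trivial), by simp⟩
  have n₁ : u₁ᶜ.Nonempty := Set.nonempty_compl.mpr e₁
  have n₂ : u₂ᶜ.Nonempty := Set.nonempty_compl.mpr e₂
  have n₃ : u₃ᶜ.Nonempty := Set.nonempty_compl.mpr e₃
  set d₁ : Y → ℝ := fun y => infDist y u₁ᶜ with hd₁
  set d₂ : Y → ℝ := fun y => infDist y u₂ᶜ with hd₂
  set d₃ : Y → ℝ := fun y => infDist y u₃ᶜ with hd₃
  have hcd₁ : Continuous d₁ := continuous_infDist_pt _
  have hcd₂ : Continuous d₂ := continuous_infDist_pt _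
  have hcd₃ : Continuous d₃ := continuous_infDist_pt _
  have dnn₁ : ∀ y, 0 ≤ d₁ y := fun y => infDist_nonneg
  have dnn₂ : ∀ y, 0 ≤ d₂ y := fun y => infDist_nonneg
  have dnn₃ : ∀ y, 0 ≤ d₃ y := fun y => infDist_nonneg
  have mem₁ : ∀ y, y ∈ u₁ ↔ d₁ y ≠ 0 := by
    intro y
    constructor
    · intro h hz
      exact ((h₁.isClosed_compl.mem_iff_infDist_zero n₁).mpr hz) h
    · intro hz
      by_contra h
      exact hz (infDist_zero_of_mem h)
  have mem₂ : ∀ y, y ∈ u₂ ↔ d₂ y ≠ 0 := by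
    intro y
    constructor
    · intro h hz
      exact ((h₂.isClosed_compl.mem_iff_infDist_zero n₂).mpr hz) h
    · intro hz
      by_contra h
      exact hz (infDist_zero_of_mem h)
  have mem₃ : ∀ y, y ∈ u₃ ↔ d₃ y ≠ 0 := by
    intro y
    constructor
    · intro h hz
      exact ((h₃.isClosed_compl.mem_iff_infDist_zero n₃).mpr hz) h
    · intro hz
      by_contra h
      exact hz (infDist_zero_of_mem h)
  have hnall : ∀ y, ¬ (d₁ y = 0 ∧ d₂ y = 0 ∧ d₃ y = 0) := by
    rintro y ⟨z₁, z₂, z₃⟩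
    rcases hcov y with h | h | h
    · exact ((mem₁ y).mp h) z₁
    · exact ((mem₂ y).mp h) z₂
    · exact ((mem₃ y).mp h) z₃
  -- σ : Y → ℂ
  set σ : Y → ℂ := fun y => (↑(d₁ y - d₃ y) : ℂ) + (↑(d₂ y - d₃ y) : ℂ) * Complex.I with hσdef
  have hσre : ∀ y, (σ y).re = d₁ y - d₃ y := by intro y; simp [hσdef]
  have hσim : ∀ y, (σ y).im = d₂ y - d₃ y := by intro y; simp [hσdef]
  have hσcont : Continuous σ := by
    exact ((Complex.continuous_ofReal.comp (hcd₁.sub hcd₃)).add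
      ((Complex.continuous_ofReal.comp (hcd₂.sub hcd₃)).mul continuous_const))
  set C : Set Y := {y | d₁ y = 0 ∨ d₂ y = 0 ∨ d₃ y = 0} with hCdef
  have hCclosed : IsClosed C := by
    have : C = d₁ ⁻¹' {0} ∪ (d₂ ⁻¹' {0} ∪ d₃ ⁻¹' {0}) := by
      ext y; simp [hCdef]
    rw [this]
    exact ((isClosed_singleton.preimage hcd₁).union
      ((isClosed_singleton.preimage hcd₂).union (isClosed_singleton.preimage hcd₃)))
  have hσne : ∀ y ∈ C, σ y ≠ 0 := by
    intro y hy h0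
    have hre : d₁ y - d₃ y = 0 := by rw [← hσre y, h0]; simp
    have him : d₂ y - d₃ y = 0 := by rw [← hσim y, h0]; simp
    have e13 : d₁ y = d₃ y := by linarith
    have e23 : d₂ y = d₃ y := by linarith
    rcases hy with h | h | h
    · exact hnall y ⟨h, by linarith, by linarith⟩
    · exact hnall y ⟨by linarith, h, by linarith⟩
    · exact hnall y ⟨by linarith, by linarith, h⟩
  have habs : ∀ y ∈ C, (0:ℝ) < ‖σ y‖ := by
    intro y hy
    exact norm_pos_iff.mpr (hσne y hy)
  -- the circle-valued map on C
  set e : C → Circle := fun c => ⟨σ c / (↑‖σ c‖ : ℂ), by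
    have hz := hσne c c.2
    have : ‖σ c / (↑‖σ c‖ : ℂ)‖ = 1 := by
      rw [norm_div, Complex.norm_real, norm_norm]
      exact div_self (norm_ne_zero_iff.mpr hz)
    simpa [Submonoid.unitSphere, mem_sphere_zero_iff_norm] using this⟩
    with hedef
  have hecont : Continuous e := by
    apply Continuous.subtype_mk
    apply Continuous.div (hσcont.comp continuous_subtype_val)
    · exact Complex.continuous_ofReal.comp
        (continuous_norm.comp (hσcont.comp continuous_subtype_val))
    · intro c
      simp only [ne_eq, Complex.ofReal_eq_zero]
      exact ne_of_gt (habs c c.2)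
  obtain ⟨g, hgcont, hge⟩ := E C hCclosed e hecont
  refine ⟨{y | 0 < ((g y : ℂ)).re}, {y | 0 < ((g y : ℂ)).im},
    {y | ((g y : ℂ)).re + ((g y : ℂ)).im < 0}, ?_, ?_, ?_, ?_, ?_, ?_, ?_, ?_⟩
  · exact isOpen_lt continuous_const (Complex.continuous_re.comp (continuous_subtype_val.comp hgcont))
  · exact isOpen_lt continuous_const (Complex.continuous_im.comp (continuous_subtype_val.comp hgcont))
  · exact isOpen_lt ((Complex.continuous_re.comp (continuous_subtype_val.comp hgcont)).add
      (Complex.continuous_im.comp (continuous_subtype_val.comp hgcont))) continuous_const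
  · -- v₁ ⊆ u₁
    intro y hy
    simp only [mem_setOf_eq] at hy
    rw [mem₁ y]
    intro hz
    have hyC : y ∈ C := Or.inl hz
    have := hge ⟨y, hyC⟩
    have hre : ((g y : ℂ)).re = (d₁ y - d₃ y) / ‖σ y‖ := by
      rw [this]
      simp only [hedef]
      rw [Complex.div_ofReal_re, hσre]
    rw [hre, hz] at hy
    have : (0 - d₃ y) / ‖σ y‖ ≤ 0 :=
      div_nonpos_of_nonpos_of_nonneg (by linarith [dnn₃ y]) (le_of_lt (habs y hyC))
    linarith
  · -- v₂ ⊆ u₂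
    intro y hy
    simp only [mem_setOf_eq] at hy
    rw [mem₂ y]
    intro hz
    have hyC : y ∈ C := Or.inr (Or.inl hz)
    have := hge ⟨y, hyC⟩
    have him : ((g y : ℂ)).im = (d₂ y - d₃ y) / ‖σ y‖ := by
      rw [this]
      simp only [hedef]
      rw [Complex.div_ofReal_im, hσim]
    rw [him, hz] at hy
    have : (0 - d₃ y) / ‖σ y‖ ≤ 0 :=
      div_nonpos_of_nonpos_of_nonneg (by linarith [dnn₃ y]) (le_of_lt (habs y hyC))
    linarith
  · -- v₃ ⊆ u₃
    intro y hy
    simp only [mem_setOf_eq] at hy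
    rw [mem₃ y]
    intro hz
    have hyC : y ∈ C := Or.inr (Or.inr hz)
    have := hge ⟨y, hyC⟩
    have hre : ((g y : ℂ)).re = (d₁ y - d₃ y) / ‖σ y‖ := by
      rw [this]; simp only [hedef]; rw [Complex.div_ofReal_re, hσre]
    have him : ((g y : ℂ)).im = (d₂ y - d₃ y) / ‖σ y‖ := by
      rw [this]; simp only [hedef]; rw [Complex.div_ofReal_im, hσim]
    rw [hre, him, hz] at hy
    have h1 : 0 ≤ (d₁ y - 0) / ‖σ y‖ :=
      div_nonneg (by linarith [dnn₁ y]) (le_of_lt (habs y hyC))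
    have h2 : 0 ≤ (d₂ y - 0) / ‖σ y‖ :=
      div_nonneg (by linarith [dnn₂ y]) (le_of_lt (habs y hyC))
    linarith
  · -- cover
    intro y
    by_contra hno
    push_neg at hno
    simp only [mem_setOf_eq, not_lt] at hno
    obtain ⟨hA, hB, hC'⟩ := hno
    have hre : ((g y : ℂ)).re = 0 := by linarith
    have him : ((g y : ℂ)).im = 0 := by linarith
    have : (g y : ℂ) = 0 := Complex.ext hre him
    have habs1 := Circle.norm_coe (g y)
    rw [this] at habs1
    simp at habs1
  · -- triple intersection empty
    ext y
    simp only [mem_inter_iff, mem_setOf_eq, mem_empty_iff_false, iff_false]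
    rintro ⟨⟨ha, hb⟩, hc⟩
    linarith

private lemma order_two_of_triple {Y : Type*} [TopologicalSpace Y]
    (T3 : ∀ u₁ u₂ u₃ : Set Y, IsOpen u₁ → IsOpen u₂ → IsOpen u₃ →
      (∀ y, y ∈ u₁ ∨ y ∈ u₂ ∨ y ∈ u₃) →
      ∃ v₁ v₂ v₃ : Set Y, IsOpen v₁ ∧ IsOpen v₂ ∧ IsOpen v₃ ∧
        v₁ ⊆ u₁ ∧ v₂ ⊆ u₂ ∧ v₃ ⊆ u₃ ∧ (∀ y, y ∈ v₁ ∨ y ∈ v₂ ∨ y ∈ v₃) ∧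
        v₁ ∩ v₂ ∩ v₃ = ∅) :
    CovDimLE Y 1 := by
  classical
  intro U hUopen hUcov
  have hUcov' : ∀ y : Y, ∃ u : {u : Set Y // u ∈ U}, y ∈ u.1 := by
    intro y
    have : y ∈ ⋃₀ (U : Set (Set Y)) := hUcov ▸ mem_univ y
    obtain ⟨t, ht, hyt⟩ := this
    exact ⟨⟨t, ht⟩, hyt⟩
  set ι := {u : Set Y // u ∈ U} with hι
  have main : ∀ S : Finset (ι × ι), ∃ v : ι → Set Y,
      (∀ i, IsOpen (v i)) ∧ (∀ i, v i ⊆ i.1) ∧ (∀ y, ∃ i, y ∈ v i) ∧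
      ∀ p ∈ S, p.1 ≠ p.2 → ∀ c, c ≠ p.1 → c ≠ p.2 → v p.1 ∩ v p.2 ∩ v c = ∅ := by
    intro S
    induction S using Finset.induction_on with
    | empty =>
      refine ⟨fun i => i.1, fun i => hUopen i.1 i.2, fun i => subset_rfl,
        fun y => hUcov' y, by simp⟩
    | @insert p S hpS ih =>
      obtain ⟨v, hvopen, hvsub, hvcov, hvS⟩ := ih
      by_cases hp : p.1 = p.2
      · refine ⟨v, hvopen, hvsub, hvcov, ?_⟩
        intro q hq hq12 c hc1 hc2
        rcases Finset.mem_insert.mp hq with rfl | hq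
        · exact absurd hp hq12
        · exact hvS q hq hq12 c hc1 hc2
      · set a := p.1
        set b := p.2
        set u₃ : Set Y := ⋃ (i : ι) (_ : i ≠ a ∧ i ≠ b), v i with hu₃
        have hu₃open : IsOpen u₃ := isOpen_iUnion fun i => isOpen_iUnion fun _ => hvopen i
        have hcov3 : ∀ y, y ∈ v a ∨ y ∈ v b ∨ y ∈ u₃ := by
          intro y
          obtain ⟨i, hi⟩ := hvcov y
          by_cases hia : i = a
          · exact Or.inl (hia ▸ hi)
          by_cases hib : i = b
          · exact Or.inr (Or.inl (hib ▸ hi))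
          · exact Or.inr (Or.inr (mem_iUnion.mpr ⟨i, mem_iUnion.mpr ⟨⟨hia, hib⟩, hi⟩⟩))
        obtain ⟨w₁, w₂, w₃, hw₁o, hw₂o, hw₃o, hw₁s, hw₂s, hw₃s, hwcov, hwtrip⟩ :=
          T3 (v a) (v b) u₃ (hvopen a) (hvopen b) hu₃open hcov3
        set v' : ι → Set Y := fun i =>
          if i = a then w₁ else if i = b then w₂ else v i ∩ w₃ with hv'
        have hv'a : v' a = w₁ := by simp [hv']
        have hv'b : v' b = w₂ := by
          simp only [hv']
          rw [if_neg (fun h : b = a => hp h.symm)]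
          simp
        have hv'other : ∀ i, i ≠ a → i ≠ b → v' i = v i ∩ w₃ := by
          intro i hia hib
          simp only [hv']
          rw [if_neg hia, if_neg hib]
        have hv'sub : ∀ i, v' i ⊆ v i := by
          intro i
          by_cases hia : i = a
          · subst hia; rw [hv'a]; exact hw₁s
          by_cases hib : i = b
          · subst hib; rw [hv'b]; exact hw₂s
          · rw [hv'other i hia hib]; exact inter_subset_left
        have hv'open : ∀ i, IsOpen (v' i) := by
          intro i
          by_cases hia : i = a
          · subst hia; rw [hv'a]; exact hw₁o
          by_cases hib : i = b
          · subst hib; rw [hv'b]; exact hw₂o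
          · rw [hv'other i hia hib]; exact (hvopen i).inter hw₃o
        have hv'cov : ∀ y, ∃ i, y ∈ v' i := by
          intro y
          rcases hwcov y with h | h | h
          · exact ⟨a, by rw [hv'a]; exact h⟩
          · exact ⟨b, by rw [hv'b]; exact h⟩
          · have hyu₃ : y ∈ u₃ := hw₃s h
            obtain ⟨i, hmem⟩ := mem_iUnion.mp hyu₃
            obtain ⟨⟨hia, hib⟩, hyi⟩ := mem_iUnion.mp hmem
            exact ⟨i, by rw [hv'other i hia hib]; exact ⟨hyi, h⟩⟩
        refine ⟨v', hv'open, fun i => (hv'sub i).trans (hvsub i), hv'cov, ?_⟩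
        intro q hq hq12 c hc1 hc2
        rcases Finset.mem_insert.mp hq with rfl | hq
        · -- the new pair
          have hsub3 : v' c ⊆ w₃ := by
            rw [hv'other c hc1 hc2]
            exact inter_subset_right
          apply subset_empty_iff.mp
          calc v' q.1 ∩ v' q.2 ∩ v' c ⊆ w₁ ∩ w₂ ∩ w₃ := by
                rw [hv'a, hv'b]
                exact inter_subset_inter subset_rfl hsub3
            _ = ∅ := hwtrip
        · apply subset_empty_iff.mp
          calc v' q.1 ∩ v' q.2 ∩ v' c ⊆ v q.1 ∩ v q.2 ∩ v c :=
                inter_subset_inter (inter_subset_inter (hv'sub _) (hv'sub _)) (hv'sub _)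
            _ = ∅ := hvS q hq hq12 c hc1 hc2
  obtain ⟨v, hvopen, hvsub, hvcov, hvtrip⟩ := main Finset.univ
  refine ⟨Finset.image v Finset.univ, ?_, ?_, ?_, ?_⟩
  · intro w hw
    obtain ⟨i, _, rfl⟩ := Finset.mem_image.mp hw
    exact hvopen i
  · apply eq_univ_of_forall
    intro y
    obtain ⟨i, hi⟩ := hvcov y
    exact ⟨v i, Finset.mem_coe.mpr (Finset.mem_image.mpr ⟨i, Finset.mem_univ i, rfl⟩), hi⟩
  · intro w hw
    obtain ⟨i, _, rfl⟩ := Finset.mem_image.mp hw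
    exact ⟨i.1, i.2, hvsub i⟩
  · intro x
    by_contra hbig
    push_neg at hbig
    have hfin : {w ∈ ((Finset.image v Finset.univ : Finset (Set Y)) : Set (Set Y)) | x ∈ w}.Finite :=
      (Finset.image v Finset.univ).finite_toSet.subset (sep_subset _ _)
    obtain ⟨A, hA, B, hB, Cc, hCc, hAB, hAC, hBC⟩ := (Set.two_lt_ncard hfin).mp hbig
    obtain ⟨hAV, hxA⟩ := hA
    obtain ⟨hBV, hxB⟩ := hB
    obtain ⟨hCV, hxC⟩ := hCc
    obtain ⟨i, _, rfl⟩ := Finset.mem_image.mp (Finset.mem_coe.mp hAV)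
    obtain ⟨j, _, rfl⟩ := Finset.mem_image.mp (Finset.mem_coe.mp hBV)
    obtain ⟨k, _, rfl⟩ := Finset.mem_image.mp (Finset.mem_coe.mp hCV)
    have hij : i ≠ j := fun h => hAB (congrArg v h)
    have hki : k ≠ i := fun h => hAC (congrArg v h).symm
    have hkj : k ≠ j := fun h => hBC (congrArg v h).symm
    have := hvtrip (i, j) (Finset.mem_univ _) hij k hki hkj
    have hx : x ∈ v i ∩ v j ∩ v k := ⟨⟨hxA, hxB⟩, hxC⟩
    rw [this] at hx
    exact hx

/-- Let `X` be a compact metric space with `dim X ≥ 2` such that every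
circle-valued map on a closed subset of `X` extends over `X` after raising to some
`k`-th power (this corresponds to `dim_ℚ X ≤ 1`). Then for every closed `F ⊆ X` with
`dim F ≥ 2` there are a closed `A ⊆ F` and a continuous `f : A → S¹` that does not
extend continuously over `F`, yet `f^k` extends continuously over `X` for some
`k ≥ 1`. -/
theorem nonextendable_map_with_extendable_power
    {X : Type*} [MetricSpace X] [CompactSpace X]
    (hdim : ¬ CovDimLE X 1)
    (hQ : ∀ A : Set X, IsClosed A → ∀ f : A → Circle, Continuous f →
      ∃ k : ℕ, 1 ≤ k ∧ ∃ φ : X → Circle, Continuous φ ∧ ∀ a : A, φ a = (f a) ^ k) :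
    ∀ F : Set X, IsClosed F → ¬ CovDimLE F 1 →
      ∃ A : Set X, A ⊆ F ∧ IsClosed A ∧ ∃ (f : A → Circle) (hAF : A ⊆ F),
        Continuous f ∧
        ¬ (∃ g : F → Circle, Continuous g ∧
            ∀ (x : X) (hx : x ∈ A), g ⟨x, hAF hx⟩ = f ⟨x, hx⟩) ∧
        ∃ k : ℕ, 1 ≤ k ∧ ∃ φ : X → Circle, Continuous φ ∧
          ∀ a : A, φ a = (f a) ^ k := by
  intro F hF hFdim
  by_contra hcon
  apply hFdim
  have hFcomp : CompactSpace ↥F := isCompact_iff_compactSpace.mp hF.isCompact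
  have E : ∀ C : Set ↥F, IsClosed C → ∀ φ : C → Circle, Continuous φ →
      ∃ g : ↥F → Circle, Continuous g ∧ ∀ c : C, g c = φ c := by
    intro C hC φ hφ
    set A : Set X := Subtype.val '' C with hA
    have hAF : A ⊆ F := by rintro x ⟨c, _, rfl⟩; exact c.2
    have hAcl : IsClosed A := (hC.isCompact.image continuous_subtype_val).isClosed
    have hmemC : ∀ a : A, (⟨a.1, hAF a.2⟩ : ↥F) ∈ C := by
      rintro ⟨x, hx⟩
      obtain ⟨c, hc, hcx⟩ := hx
      have heq : (⟨x, hAF ⟨c, hc, hcx⟩⟩ : ↥F) = c := Subtype.ext hcx.symm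
      rw [heq]; exact hc
    set f : A → Circle := fun a => φ ⟨⟨a.1, hAF a.2⟩, hmemC a⟩ with hfdef
    have hf : Continuous f := hφ.comp ((continuous_subtype_val.subtype_mk _).subtype_mk _)
    by_contra hno
    apply hcon
    refine ⟨A, hAF, hAcl, f, hAF, hf, ?_, hQ A hAcl f hf⟩
    rintro ⟨g, hg, hgf⟩
    apply hno
    refine ⟨g, hg, ?_⟩
    rintro ⟨⟨x, hxF⟩, hxC⟩
    have hxA : x ∈ A := ⟨⟨x, hxF⟩, hxC, rfl⟩
    exact hgf x hxA
  exact order_two_of_triple fun u₁ u₂ u₃ h₁ h₂ h₃ hc =>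
    triple_shrink E u₁ u₂ u₃ h₁ h₂ h₃ hc
end
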